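/- arXiv:2508.14685 — 3 statements merged into one kernel-verified Lean document; each statement's English description precedes it below -/
import Mathlib

section
/- For SSA scores on z ∈ ℝ^K with unique maximizer j and z_j − z_i ≥ δ for all i ≠ j, if all coordinates are nonnegative then score(z)_i ≥ 1 / (K · ((1 + b·z_j)/(1 + b·z_i))^n) > 0 for all i; in particular non-maximal coordinates retain weight bounded below by a ratio that decays only polynomially in the gap, unlike softmax where it decays exponentially. -/
open Real Finset

noncomputable def ssaBase (b n x : ℝ) : ℝ :=
  (1 + b * |x|) ^ (Real.sign x * n)

noncomputable def ssaScore {K : ℕ} (b n : ℝ) (z : Fin K → ℝ) (i : Fin K) : ℝ :=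
  ssaBase b n (z i) / ∑ k, ssaBase b n (z k)

/-!
On nonnegative inputs `g x = (1 + b x) ^ n` is positive and increasing, so the normalising sum
is at most `K · g (z j)`; hence `score(z)_i ≥ g (z i) / (K · g (z j))`, which is the claimed bound.
-/

lemma ssaBase_of_nonneg (b n : ℝ) {x : ℝ} (hx : 0 ≤ x) : ssaBase b n x = (1 + b * x) ^ n := by
  rcases hx.eq_or_lt with rfl | hx
  · simp [ssaBase]
  · rw [ssaBase, Real.sign_of_pos hx, one_mul, abs_of_pos hx]

lemma ssaBase_pos {b : ℝ} (hb : 0 ≤ b) (n x : ℝ) : 0 < ssaBase b n x :=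
  rpow_pos_of_pos (by positivity) _

lemma ssaBase_le_ssaBase {b n x y : ℝ} (hb : 0 ≤ b) (hn : 0 ≤ n) (hx : 0 ≤ x) (hxy : x ≤ y) :
    ssaBase b n x ≤ ssaBase b n y := by
  rw [ssaBase_of_nonneg b n hx, ssaBase_of_nonneg b n (hx.trans hxy)]
  exact rpow_le_rpow (by positivity) (by gcongr) hn

lemma div_card_mul_le_div_sum {ι : Type*} [Fintype ι] {w : ι → ℝ} (hw : ∀ k, 0 < w k) {j : ι}
    (hj : ∀ k, w k ≤ w j) (i : ι) :
    w i / (Fintype.card ι * w j) ≤ w i / ∑ k, w k := by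
  have hsum : ∑ k, w k ≤ Fintype.card ι * w j := by
    simpa using sum_le_card_nsmul univ w (w j) fun k _ => hj k
  exact div_le_div_of_nonneg_left (hw i).le (sum_pos (fun k _ => hw k) ⟨j, mem_univ j⟩) hsum

lemma ssaBase_div_le_ssaScore {K : ℕ} {b n : ℝ} (hb : 0 ≤ b) (hn : 0 ≤ n) {z : Fin K → ℝ}
    (hz : ∀ k, 0 ≤ z k) {j : Fin K} (hj : ∀ k, z k ≤ z j) (i : Fin K) :
    ssaBase b n (z i) / (K * ssaBase b n (z j)) ≤ ssaScore b n z i := by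
  simpa only [ssaScore, Fintype.card_fin] using
    div_card_mul_le_div_sum (fun k => ssaBase_pos hb n (z k))
      (fun k => ssaBase_le_ssaBase hb hn (hz k) (hj k)) i

theorem ssaScore_lower_bound {K : ℕ} (b n : ℝ) (hb : 0 < b) (hn : 1 ≤ n)
    (z : Fin K → ℝ) (j : Fin K) (δ : ℝ) (hδ : 0 < δ)
    (hgap : ∀ i, i ≠ j → δ ≤ z j - z i) (hnonneg : ∀ i, 0 ≤ z i) :
    ∀ i, 0 < 1 / ((K : ℝ) * ((1 + b * z j) / (1 + b * z i)) ^ n) ∧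
      1 / ((K : ℝ) * ((1 + b * z j) / (1 + b * z i)) ^ n) ≤ ssaScore b n z i := by
  intro i
  have hmax : ∀ k, z k ≤ z j := fun k => by
    rcases eq_or_ne k j with rfl | hk
    · exact le_rfl
    · linarith [hgap k hk]
  have hpos : ∀ k, 0 < 1 + b * z k := fun k => by
    have := hnonneg k
    positivity
  have hbound : 1 / ((K : ℝ) * ((1 + b * z j) / (1 + b * z i)) ^ n)
      = ssaBase b n (z i) / (K * ssaBase b n (z j)) := by
    rw [ssaBase_of_nonneg b n (hnonneg i), ssaBase_of_nonneg b n (hnonneg j),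
      div_rpow (hpos j).le (hpos i).le]
    field_simp
  have hK : (0 : ℝ) < K := Nat.cast_pos.mpr (Fin.pos j)
  rw [hbound]
  exact ⟨div_pos (ssaBase_pos hb.le n _) (mul_pos hK (ssaBase_pos hb.le n _)),
    ssaBase_div_le_ssaScore hb.le (by linarith) hnonneg hmax i⟩
end

section
/- Fix K ≥ 2 and indices i ≠ j. For any M < 1 there exists z ∈ ℝ^K with z_j − z_i ≥ 4 such that softmax(z)_j ≥ M, while for the same z with all coordinates scaled into [0, C] the SSA score with b = 1, n = 1 satisfies score(z)_j ≤ (1 + z_j)/(K + Σ_k z_k) < 1 uniformly bounded away from 1 when all z_k ≤ C. -/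
/-! Softmax saturates along `z = t • eⱼ`: its `j`-th coordinate is `eᵗ / (eᵗ + (K - 1)) → 1` as
`t → ∞`, so some `t ≥ 4` already gives a value `≥ M`. The SSA score cannot: with `w` in `[0, C]ᴷ`,
`w j ≤ ∑ₖ w k` and `x ↦ (1 + x) / (K + x)` is increasing, so the score is at most
`(1 + C) / (K + C)`, which is `< 1` because `i ≠ j` forces `K ≥ 2`. -/

open Real Finset

noncomputable def softmax {K : ℕ} (z : Fin K → ℝ) (i : Fin K) : ℝ :=
  Real.exp (z i) / ∑ k, Real.exp (z k)

/-- SSA score with `b = 1`, `n = 1` on nonnegative inputs. -/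
noncomputable def ssaScore1 {K : ℕ} (z : Fin K → ℝ) (i : Fin K) : ℝ :=
  (1 + z i) / ∑ k, (1 + z k)

open Filter Topology

lemma Fintype.sum_comp_single {ι M : Type*} [Fintype ι] [DecidableEq ι] [AddCommMonoid M]
    (f : ℝ → M) (j : ι) (t : ℝ) :
    ∑ k, f ((Pi.single j t : ι → ℝ) k) = f t + (Fintype.card ι - 1) • f 0 := by
  rw [Fintype.sum_eq_add_sum_compl j, Pi.single_eq_same,
    Finset.sum_congr rfl fun k hk => by rw [Pi.single_eq_of_ne (Finset.notMem_singleton.mp (Finset.mem_compl.mp hk))],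
    Finset.sum_const, Finset.card_compl, Finset.card_singleton]

lemma softmax_single_self {K : ℕ} (j : Fin K) (t : ℝ) :
    softmax (Pi.single j t) j = exp t / (exp t + (K - 1 : ℕ)) := by
  rw [softmax, Fintype.sum_comp_single, Pi.single_eq_same, Fintype.card_fin, exp_zero,
    nsmul_eq_mul, mul_one]

lemma tendsto_exp_div_exp_add (c : ℝ) :
    Tendsto (fun t => exp t / (exp t + c)) atTop (𝓝 1) := by
  have key : ∀ t, exp t / (exp t + c) = (1 + c * exp (-t))⁻¹ := fun t => by
    rw [exp_neg, ← div_eq_mul_inv, one_add_div (exp_ne_zero t), inv_div]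
  simp only [key]
  simpa using ((tendsto_exp_neg_atTop_nhds_zero.const_mul c).const_add 1).inv₀ (by simp)

lemma ssaScore1_eq {K : ℕ} (w : Fin K → ℝ) (j : Fin K) :
    ssaScore1 w j = (1 + w j) / ((K : ℝ) + ∑ k, w k) := by
  rw [ssaScore1, Finset.sum_add_distrib, Finset.sum_const, Finset.card_univ, Fintype.card_fin,
    nsmul_one]

lemma one_add_div_card_add_sum_le {K : ℕ} {C : ℝ} (w : Fin K → ℝ)
    (hw : ∀ k, 0 ≤ w k ∧ w k ≤ C) (j : Fin K) :
    (1 + w j) / ((K : ℝ) + ∑ k, w k) ≤ (1 + C) / ((K : ℝ) + C) := by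
  have hK : (1 : ℝ) ≤ K := by exact_mod_cast Fin.pos j
  have hwj_le_sum : w j ≤ ∑ k, w k :=
    Finset.single_le_sum (fun k _ => (hw k).1) (Finset.mem_univ j)
  obtain ⟨hwj_nonneg, hwj_le⟩ := hw j
  rw [div_le_div_iff₀ (by linarith) (by linarith)]
  nlinarith

lemma one_add_div_card_add_lt_one {K : ℕ} {i j : Fin K} (hij : i ≠ j) {C : ℝ} (hC : 0 ≤ C) :
    (1 + C) / ((K : ℝ) + C) < 1 := by
  have : Nontrivial (Fin K) := ⟨i, j, hij⟩
  have hK : (1 : ℝ) < K := by exact_mod_cast Fintype.card_fin K ▸ Fintype.one_lt_card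
  rw [div_lt_one (by linarith)]
  linarith

theorem softmax_saturates_ssa_does_not_general {K : ℕ} (i j : Fin K) (hij : i ≠ j)
    (M : ℝ) (hM : M < 1) (C : ℝ) :
    ∃ z : Fin K → ℝ, 4 ≤ z j - z i ∧ M ≤ softmax z j ∧
      ∀ w : Fin K → ℝ, (∀ k, 0 ≤ w k ∧ w k ≤ C) →
        ssaScore1 w j ≤ (1 + w j) / ((K : ℝ) + ∑ k, w k) ∧
        (1 + w j) / ((K : ℝ) + ∑ k, w k) ≤ (1 + C) / ((K : ℝ) + C) ∧
        (1 + C) / ((K : ℝ) + C) < 1 := by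
  obtain ⟨t, ht4, htM⟩ := ((eventually_ge_atTop 4).and
    ((tendsto_exp_div_exp_add _).eventually_const_le hM)).exists
  refine ⟨Pi.single j t, ?_, ?_, fun w hw => ⟨(ssaScore1_eq w j).le,
    one_add_div_card_add_sum_le w hw j, one_add_div_card_add_lt_one hij ((hw j).1.trans (hw j).2)⟩⟩
  · rwa [Pi.single_eq_same, Pi.single_eq_of_ne hij, sub_zero]
  · rwa [softmax_single_self]

theorem softmax_saturates_ssa_does_not {K : ℕ} (hK : 2 ≤ K) (i j : Fin K) (hij : i ≠ j)
    (M : ℝ) (hM : M < 1) (C : ℝ) (hC : 0 ≤ C) :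
    ∃ z : Fin K → ℝ, 4 ≤ z j - z i ∧ M ≤ softmax z j ∧
      ∀ w : Fin K → ℝ, (∀ k, 0 ≤ w k ∧ w k ≤ C) →
        ssaScore1 w j ≤ (1 + w j) / ((K : ℝ) + ∑ k, w k) ∧
        (1 + w j) / ((K : ℝ) + ∑ k, w k) ≤ (1 + C) / ((K : ℝ) + C) ∧
        (1 + C) / ((K : ℝ) + C) < 1 :=
  softmax_saturates_ssa_does_not_general i j hij M hM C
end

section
/- Uniform attention on a single deviant element: for SSA with b = 1, n = 1 on nonnegative scores z ∈ ℝ₊^K where z_j = M and z_i ≤ 1 for i ≠ j, the score of the maximal element satisfies score(z)_j ≤ (1+M)/(K + M); in particular for fixed M, score(z)_j → 0 as K → ∞, whereas softmax(z)_j ≥ 1/(1 + (K−1)·e^(1−M)) stays close to 1 as long as K·e^(−M) is small. -/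
open Real Finset Filter

/-! Every coordinate contributes at least `1` to the SSA denominator, so it is at least `K + M`
and the deviant's share decays like `1/K`. The softmax denominator is at most
`exp M + (K - 1) e`, which is dominated by `exp M` while `K e^{-M}` is small. -/

lemma card_add_le_sum_one_add {K : ℕ} {z : Fin K → ℝ} (hz : ∀ k, 0 ≤ z k) (j : Fin K) :
    (K : ℝ) + z j ≤ ∑ k, (1 + z k) := by
  have hsum : ∑ k, (1 + z k) = (K : ℝ) + ∑ k, z k := by
    simp [Finset.sum_add_distrib]
  rw [hsum]
  gcongr
  exact Finset.single_le_sum (fun k _ => hz k) (Finset.mem_univ j)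

lemma ssaScore1_le {K : ℕ} {z : Fin K → ℝ} (hz : ∀ k, 0 ≤ z k) (j : Fin K) :
    ssaScore1 z j ≤ (1 + z j) / ((K : ℝ) + z j) := by
  have hK : (1 : ℝ) ≤ K := by exact_mod_cast j.pos
  have hj := hz j
  exact div_le_div_of_nonneg_left (by linarith) (by linarith) (card_add_le_sum_one_add hz j)

lemma sum_exp_le_of_forall_ne_le {K : ℕ} {z : Fin K → ℝ} {j : Fin K} {c : ℝ}
    (hc : ∀ i, i ≠ j → z i ≤ c) :
    ∑ k, exp (z k) ≤ exp (z j) * (1 + ((K : ℝ) - 1) * exp (c - z j)) := by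
  have hrest : ∑ k ∈ univ.erase j, exp (z k) ≤ ((K : ℝ) - 1) * exp c := by
    calc ∑ k ∈ univ.erase j, exp (z k) ≤ ∑ _k ∈ univ.erase j, exp c :=
          sum_le_sum fun i hi => exp_le_exp.2 (hc i (ne_of_mem_erase hi))
      _ = ((K : ℝ) - 1) * exp c := by
          rw [sum_const, card_erase_of_mem (mem_univ j), card_univ, Fintype.card_fin,
            nsmul_eq_mul, Nat.cast_sub j.pos, Nat.cast_one]
  calc ∑ k, exp (z k) = exp (z j) + ∑ k ∈ univ.erase j, exp (z k) :=
        (add_sum_erase _ _ (mem_univ j)).symm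
    _ ≤ exp (z j) + ((K : ℝ) - 1) * exp c := by gcongr
    _ = exp (z j) * (1 + ((K : ℝ) - 1) * exp (c - z j)) := by
        rw [exp_sub]
        field_simp

lemma one_div_le_softmax {K : ℕ} {z : Fin K → ℝ} {j : Fin K} {c : ℝ}
    (hc : ∀ i, i ≠ j → z i ≤ c) :
    1 / (1 + ((K : ℝ) - 1) * exp (c - z j)) ≤ softmax z j := by
  have hK : (1 : ℝ) ≤ K := by exact_mod_cast j.pos
  have hD : 0 < 1 + ((K : ℝ) - 1) * exp (c - z j) := by positivity
  have hS : 0 < ∑ k, exp (z k) := sum_pos (fun k _ => exp_pos _) ⟨j, mem_univ j⟩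
  rw [softmax, div_le_div_iff₀ hD hS, one_mul]
  exact sum_exp_le_of_forall_ne_le hc

theorem ssa_dilutes_single_deviant (M : ℝ) :
    (∀ (K : ℕ) (z : Fin K → ℝ) (j : Fin K), (∀ k, 0 ≤ z k) → z j = M →
      (∀ i, i ≠ j → z i ≤ 1) →
      ssaScore1 z j ≤ (1 + M) / ((K : ℝ) + M) ∧
      1 / (1 + ((K : ℝ) - 1) * Real.exp (1 - M)) ≤ softmax z j) ∧
    Tendsto (fun K : ℕ => (1 + M) / ((K : ℝ) + M)) atTop (nhds 0) := by
  refine ⟨fun K z j hz hj hle => ?_, ?_⟩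
  · subst hj
    exact ⟨ssaScore1_le hz j, one_div_le_softmax hle⟩
  · exact tendsto_const_nhds.div_atTop
      (tendsto_atTop_add_const_right _ M tendsto_natCast_atTop_atTop)
end
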